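/- arXiv:1906.09649 — 2 statements merged into one kernel-verified Lean document; each statement's English description precedes it below -/
import Mathlib

section
/- If $GF\Omega \xrightarrow{\omega} \Omega$ is an initial $GF$-algebra, then $FGF\Omega \xrightarrow{F\omega} F\Omega$ is an initial $FG$-algebra. -/
open CategoryTheory CategoryTheory.Limits

universe v v₂ u u₂

/-!
This is the rolling rule for initial algebras. By Lambek's lemma `ω` is an isomorphism, and hence
so is `Fω`. For an `FG`-algebra `(B, b)`, the `GF`-algebra `(GB, Gb)` receives the fold
`φ : Ω ⟶ GB`, and `Fφ ≫ b` is an `FG`-algebra map out of `(FΩ, Fω)`. Conversely every such map `m`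
is recovered from `Gm`, since `m = (Fω)⁻¹ ≫ FGm ≫ b`, and `ω⁻¹ ≫ Gm` is a `GF`-algebra map out of
the initial algebra, hence equals `φ`.
-/

namespace CategoryTheory.Endofunctor.Algebra

variable {C : Type u} [Category.{v} C] {D : Type u₂} [Category.{v₂} D] (F : C ⥤ D) (G : D ⥤ C)

def roll : Algebra (F ⋙ G) ⥤ Algebra (G ⋙ F) where
  obj A := ⟨F.obj A.a, F.map A.str⟩
  map f :=
    { f := F.map f.f
      h := by
        dsimp
        rw [← F.map_comp, ← F.map_comp]
        exact congrArg F.map f.h }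

def rollStr : roll F G ⋙ roll G F ⟶ 𝟭 _ where
  app A := { f := A.str }
  naturality _ _ m := by
    ext
    exact m.h

instance isIso_rollStr_app (A : Algebra (F ⋙ G)) [IsIso A.str] : IsIso ((rollStr F G).app A) :=
  have : IsIso ((rollStr F G).app A).f := inferInstanceAs (IsIso A.str)
  iso_of_iso _

theorem roll_map_rollStr_app (A : Algebra (F ⋙ G)) :
    (roll F G).map ((rollStr F G).app A) = (rollStr G F).app ((roll F G).obj A) :=
  rfl

end CategoryTheory.Endofunctor.Algebra

open CategoryTheory.Endofunctor.Algebra in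
/-- If `GF Ω → Ω` is an initial `GF`-algebra, then `FGF Ω → F Ω` is an initial
`FG`-algebra.  Note that in Mathlib notation `GF = F ⋙ G` and `FG = G ⋙ F`. -/
theorem initial_algebra_reflect {C : Type u} [Category.{v} C] {D : Type u₂} [Category.{v₂} D]
    (F : C ⥤ D) (G : D ⥤ C) (A : Endofunctor.Algebra (F ⋙ G))
    (h : IsInitial A) :
    Nonempty (IsInitial (⟨F.obj A.a, F.map A.str⟩ : Endofunctor.Algebra (G ⋙ F))) := by
  have := Initial.str_isIso h
  suffices IsInitial ((roll F G).obj A) from ⟨this⟩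
  refine IsInitial.ofUniqueHom
    (fun B => (roll F G).map (h.to ((roll G F).obj B)) ≫ (rollStr G F).app B) fun B m => ?_
  have fold_eq : h.to ((roll G F).obj B) = inv ((rollStr F G).app A) ≫ (roll G F).map m :=
    h.hom_ext _ _
  calc m = (roll F G).map (inv ((rollStr F G).app A)) ≫ (rollStr G F).app _ ≫ m := by
        rw [← roll_map_rollStr_app, Functor.map_inv, IsIso.inv_hom_id_assoc]
    _ = (roll F G).map (h.to ((roll G F).obj B)) ≫ (rollStr G F).app B := by
        rw [fold_eq, Functor.map_comp, Category.assoc]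
        exact congrArg _ ((rollStr G F).naturality m).symm
end

section
/- If $\Omega \xrightarrow{\omega} GF\Omega$ is a final $GF$-coalgebra, then $F\Omega \xrightarrow{F\omega} FGF\Omega$ is a final $FG$-coalgebra. -/
open CategoryTheory CategoryTheory.Limits

universe v v₂ u u₂

/-!
Write `Φ` for `(A, a) ↦ (F A, F a)`, from `GF`-coalgebras to `FG`-coalgebras, and `Ψ` for
`(B, b) ↦ (G B, G b)` in the other direction. Every structure map `b : B ⟶ FG B` is an
`FG`-coalgebra morphism `B ⟶ ΦΨ B`, so `b ≫ Φ(!_{ΨB})` is a morphism `B ⟶ ΦΩ`. By Lambek's lemma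
`ω` has an inverse `j`, which is a coalgebra morphism `ΨΦΩ ⟶ Ω`; any `m : B ⟶ ΦΩ` is recovered as
`b ≫ Φ(Ψ m ≫ j)`, and `Ψ m ≫ j = !_{ΨB}` by finality of `Ω`.
-/

namespace CategoryTheory.Endofunctor.Coalgebra

variable {C : Type u} [Category.{v} C] {D : Type u₂} [Category.{v₂} D]

def strHom {T : C ⥤ C} (A : Coalgebra T) : A ⟶ ⟨T.obj A.V, T.map A.str⟩ where
  f := A.str

abbrev roll (F : C ⥤ D) (G : D ⥤ C) : Coalgebra (F ⋙ G) ⥤ Coalgebra (G ⋙ F) where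
  obj V := ⟨F.obj V.V, F.map V.str⟩
  map m :=
    { f := F.map m.f
      h := by
        simp only [Functor.comp_map, ← F.map_comp]
        exact congrArg F.map m.h }

theorem strHom_comp_roll_map_roll_map_comp {F : C ⥤ D} {G : D ⥤ C} {V : Coalgebra (F ⋙ G)}
    {B : Coalgebra (G ⋙ F)} (m : B ⟶ (roll F G).obj V)
    (j : (roll G F).obj ((roll F G).obj V) ⟶ V) (hj : V.str ≫ j.f = 𝟙 V.V) :
    strHom B ≫ (roll F G).map ((roll G F).map m ≫ j) = m := by
  have hm : B.str ≫ F.map (G.map m.f) = m.f ≫ F.map V.str := m.h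
  refine Hom.ext ?_
  change B.str ≫ F.map (G.map m.f ≫ j.f) = m.f
  rw [F.map_comp, reassoc_of% hm, ← F.map_comp, hj, F.map_id, Category.comp_id]

end CategoryTheory.Endofunctor.Coalgebra

/-- If `Ω → GF Ω` is a final `GF`-coalgebra, then `F Ω → FGF Ω` is a final
`FG`-coalgebra.  Note that in Mathlib notation `GF = F ⋙ G` and `FG = G ⋙ F`. -/
theorem final_coalgebra_reflect {C : Type u} [Category.{v} C] {D : Type u₂} [Category.{v₂} D]
    (F : C ⥤ D) (G : D ⥤ C) (V : Endofunctor.Coalgebra (F ⋙ G))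
    (h : IsTerminal V) :
    Nonempty (IsTerminal (⟨F.obj V.V, F.map V.str⟩ : Endofunctor.Coalgebra (G ⋙ F))) :=
  open Endofunctor.Coalgebra in
  ⟨IsTerminal.ofUniqueHom (fun B => strHom B ≫ (roll F G).map (h.from ((roll G F).obj B)))
    fun B m =>
      (strHom_comp_roll_map_roll_map_comp m _ (Terminal.right_inv h)).symm.trans
        (congrArg (fun k : (roll G F).obj B ⟶ V => strHom B ≫ (roll F G).map k) (h.hom_ext _ _))⟩
end
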